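/- arXiv:2309.03405 — 2 statements merged into one kernel-verified Lean document; each statement's English description precedes it below -/
import Mathlib

section
/- Let 𝒜 be a MAD family on ℕ and let f : ℕ → ℕ. Then the set D = {p ∈ ω* : there exists B ∈ p such that either f restricted to B is constant, or f restricted to B is injective and f[B] ⊆ a for some a ∈ 𝒜} is an open dense subset of ω*. -/
open Set

/-- An almost disjoint family on ℕ: an infinite collection of infinite subsets of ℕ
any two distinct members of which have finite intersection. -/
def AlmostDisjointFamily (𝒜 : Set (Set ℕ)) : Prop :=
  𝒜.Infinite ∧ (∀ a ∈ 𝒜, a.Infinite) ∧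
    ∀ a ∈ 𝒜, ∀ b ∈ 𝒜, a ≠ b → (a ∩ b).Finite

/-- A MAD family: an almost disjoint family such that every infinite subset of ℕ
has infinite intersection with some member. -/
def MadFamily (𝒜 : Set (Set ℕ)) : Prop :=
  AlmostDisjointFamily 𝒜 ∧ ∀ X : Set ℕ, X.Infinite → ∃ a ∈ 𝒜, (X ∩ a).Infinite

/-- The underlying set of the Isbell–Mrówka space: ℕ ⊔ 𝒜. -/
def PsiSpace (𝒜 : Set (Set ℕ)) : Type := ℕ ⊕ {a : Set ℕ // a ∈ 𝒜}

/-- The isolated points of the Isbell–Mrówka space. -/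
def PsiSpace.nat {𝒜 : Set (Set ℕ)} (n : ℕ) : PsiSpace 𝒜 := Sum.inl n

/-- The points of the Isbell–Mrówka space corresponding to members of 𝒜. -/
def PsiSpace.pt {𝒜 : Set (Set ℕ)} (a : {a : Set ℕ // a ∈ 𝒜}) : PsiSpace 𝒜 := Sum.inr a

/-- The topology of the Isbell–Mrówka space, generated by the singletons {n}
and the sets {a} ∪ (a \ F) for F finite. -/
instance (𝒜 : Set (Set ℕ)) : TopologicalSpace (PsiSpace 𝒜) :=
  TopologicalSpace.generateFrom
    ({S | ∃ n : ℕ, S = {PsiSpace.nat n}} ∪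
      {S | ∃ (a : {a : Set ℕ // a ∈ 𝒜}) (F : Set ℕ), F.Finite ∧
        S = insert (PsiSpace.pt a) (PsiSpace.nat '' ((a : Set ℕ) \ F))})

/-- A space is pseudocompact if every continuous real-valued function on it is bounded. -/
def Pseudocompact (X : Type*) [TopologicalSpace X] : Prop :=
  ∀ f : X → ℝ, Continuous f → ∃ M : ℝ, ∀ x, |f x| ≤ M


/-- A free (nonprincipal) ultrafilter on ℕ. -/
def IsFree (p : Ultrafilter ℕ) : Prop := (p : Filter ℕ) ≤ Filter.cofinite

/-- x is a p-limit of the sequence (U n) of sets: every open neighbourhood of x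
meets U n for p-many n. -/
def IsPLimit {X : Type*} [TopologicalSpace X] (p : Ultrafilter ℕ) (U : ℕ → Set X)
    (x : X) : Prop :=
  ∀ V : Set X, IsOpen V → x ∈ V → {n : ℕ | (U n ∩ V).Nonempty} ∈ p

/-- X is p-pseudocompact: every sequence of nonempty open subsets has a p-limit. -/
def PPseudocompact (X : Type*) [TopologicalSpace X] (p : Ultrafilter ℕ) : Prop :=
  ∀ U : ℕ → Set X, (∀ n, IsOpen (U n) ∧ (U n).Nonempty) → ∃ x : X, IsPLimit p U x

/-- X is (κ, A)-pseudocompact: for every κ-indexed family of sequences of nonempty open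
sets there is p ∈ A such that each sequence has a p-limit. -/
def KAPseudocompact (X : Type*) [TopologicalSpace X] (κ : Cardinal.{0})
    (A : Set (Ultrafilter ℕ)) : Prop :=
  ∀ (ι : Type) (_ : Cardinal.mk ι = κ) (U : ι → ℕ → Set X),
    (∀ i n, IsOpen (U i n) ∧ (U i n).Nonempty) →
    ∃ p ∈ A, ∀ i, ∃ x : X, IsPLimit p (U i) x

/-- ω*: the space of free ultrafilters on ℕ. -/
def OmegaStar : Type := {p : Ultrafilter ℕ // IsFree p}

/-- The topology on ω*, generated by the base B* = {p : B ∈ p} for B ⊆ ℕ. -/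
instance : TopologicalSpace OmegaStar :=
  TopologicalSpace.generateFrom
    {S : Set OmegaStar | ∃ B : Set ℕ, S = {p : OmegaStar | B ∈ p.1}}

/-- The Baire (Novák) number n(ω*): the least cardinality of a family of dense open
subsets of ω* with empty intersection. -/
noncomputable def baireNumberOmegaStar : Cardinal.{0} :=
  sInf {c : Cardinal.{0} | ∃ D : Set (Set OmegaStar),
    (∀ U ∈ D, IsOpen U ∧ Dense U) ∧ ⋂₀ D = ∅ ∧ Cardinal.mk ↥D = c}

/-- Any infinite subset of ℕ is contained in some free ultrafilter. -/
lemma exists_free_ultrafilter_of_infinite {C : Set ℕ} (hC : C.Infinite) :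
    ∃ p : OmegaStar, C ∈ p.1 := by
  have hne : (Filter.cofinite ⊓ Filter.principal C).NeBot :=
    hC.cofinite_inf_principal_neBot
  let p := Ultrafilter.of (Filter.cofinite ⊓ Filter.principal C)
  have hle : (p : Filter ℕ) ≤ Filter.cofinite ⊓ Filter.principal C := Ultrafilter.of_le _
  refine ⟨⟨p, hle.trans inf_le_left⟩, ?_⟩
  exact Filter.le_principal_iff.mp (hle.trans inf_le_right)

/-- In a free ultrafilter, all members are infinite. -/
lemma infinite_of_mem_free {p : OmegaStar} {B : Set ℕ} (hB : B ∈ p.1) : B.Infinite := by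
  intro hfin
  have h1 : Bᶜ ∈ p.1 := p.2 (Filter.mem_cofinite.mpr (by simpa using hfin))
  have := p.1.1.inter_sets hB h1
  simp at this

/-- Every open set of ω* around a point contains a basic set around that point. -/
lemma exists_basic_subset {U : Set OmegaStar} (hU : IsOpen U) {p : OmegaStar}
    (hp : p ∈ U) : ∃ B ∈ p.1, ∀ q : OmegaStar, B ∈ q.1 → q ∈ U := by
  induction hU with
  | basic S hS =>
    obtain ⟨B, rfl⟩ := hS
    exact ⟨B, hp, fun q hq => hq⟩
  | univ => exact ⟨Set.univ, Filter.univ_mem, fun q _ => trivial⟩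
  | inter S T _ _ ihS ihT =>
    obtain ⟨B, hB, hBS⟩ := ihS hp.1
    obtain ⟨C, hC, hCT⟩ := ihT hp.2
    exact ⟨B ∩ C, p.1.1.inter_sets hB hC,
      fun q hq => ⟨hBS q (q.1.1.sets_of_superset hq Set.inter_subset_left),
        hCT q (q.1.1.sets_of_superset hq Set.inter_subset_right)⟩⟩
  | sUnion S hS ih =>
    obtain ⟨T, hT, hpT⟩ := hp
    obtain ⟨B, hB, hBT⟩ := ih T hT hpT
    exact ⟨B, hB, fun q hq => ⟨T, hT, hBT q hq⟩⟩

/-- The combinatorial core: every infinite B contains an infinite C on which f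
is constant, or injective with image inside some member of the MAD family. -/
lemma key_comb {𝒜 : Set (Set ℕ)} (h𝒜 : MadFamily 𝒜) (f : ℕ → ℕ) {B : Set ℕ}
    (hB : B.Infinite) : ∃ C : Set ℕ, C ⊆ B ∧ C.Infinite ∧
      ((∃ k : ℕ, ∀ n ∈ C, f n = k) ∨ (Set.InjOn f C ∧ ∃ a ∈ 𝒜, f '' C ⊆ a)) := by
  by_cases hfib : ∃ k : ℕ, (B ∩ f ⁻¹' {k}).Infinite
  · obtain ⟨k, hk⟩ := hfib
    exact ⟨B ∩ f ⁻¹' {k}, Set.inter_subset_left, hk, Or.inl ⟨k, fun n hn => hn.2⟩⟩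
  · push_neg at hfib
    -- image of B is infinite
    have himg : (f '' B).Infinite := by
      intro hfin
      apply hB
      have : B ⊆ ⋃ k ∈ f '' B, B ∩ f ⁻¹' {k} := by
        intro x hx
        exact Set.mem_biUnion ⟨x, hx, rfl⟩ ⟨hx, rfl⟩
      exact Set.Finite.subset (hfin.biUnion (fun k _ => hfib k)) this
    obtain ⟨C₀, hC₀B, hbij⟩ := Set.exists_subset_bijOn B f
    have hC₀inf : C₀.Infinite := by
      intro hfin
      exact himg (hbij.image_eq ▸ hfin.image f)
    obtain ⟨a, ha, hia⟩ := h𝒜.2 (f '' C₀) (by rwa [hbij.image_eq])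
    set C := C₀ ∩ f ⁻¹' a with hCdef
    have hCinf : C.Infinite := by
      intro hfin
      apply hia
      have : f '' C₀ ∩ a ⊆ f '' C := by
        rintro y ⟨⟨x, hx, rfl⟩, hya⟩
        exact ⟨x, ⟨hx, hya⟩, rfl⟩
      exact Set.Finite.subset (hfin.image f) this
    refine ⟨C, Set.inter_subset_left.trans hC₀B, hCinf,
      Or.inr ⟨hbij.injOn.mono Set.inter_subset_left, a, ha, ?_⟩⟩
    rintro y ⟨x, hx, rfl⟩
    exact hx.2

theorem stmt8 (𝒜 : Set (Set ℕ)) (h𝒜 : MadFamily 𝒜) (f : ℕ → ℕ) :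
    IsOpen {p : OmegaStar | ∃ B ∈ p.1, (∃ k : ℕ, ∀ n ∈ B, f n = k) ∨
        (Set.InjOn f B ∧ ∃ a ∈ 𝒜, f '' B ⊆ a)} ∧
    Dense {p : OmegaStar | ∃ B ∈ p.1, (∃ k : ℕ, ∀ n ∈ B, f n = k) ∨
        (Set.InjOn f B ∧ ∃ a ∈ 𝒜, f '' B ⊆ a)} := by
  set D := {p : OmegaStar | ∃ B ∈ p.1, (∃ k : ℕ, ∀ n ∈ B, f n = k) ∨
      (Set.InjOn f B ∧ ∃ a ∈ 𝒜, f '' B ⊆ a)} with hD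
  constructor
  · rw [isOpen_iff_forall_mem_open]
    rintro p ⟨B, hBp, hprop⟩
    refine ⟨{q : OmegaStar | B ∈ q.1}, fun q hq => ⟨B, hq, hprop⟩,
      TopologicalSpace.GenerateOpen.basic _ ⟨B, rfl⟩, hBp⟩
  · rw [dense_iff_inter_open]
    intro U hU ⟨p, hp⟩
    obtain ⟨B, hBp, hBU⟩ := exists_basic_subset hU hp
    have hBinf : B.Infinite := infinite_of_mem_free hBp
    obtain ⟨C, hCB, hCinf, hprop⟩ := key_comb h𝒜 f hBinf
    obtain ⟨q, hCq⟩ := exists_free_ultrafilter_of_infinite hCinf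
    have hBq : B ∈ q.1 := q.1.1.sets_of_superset hCq hCB
    exact ⟨q, hBU q hBq, C, hCq, hprop⟩
end

section
/- The Baire number of ω* is strictly larger than 𝔠 if and only if for every MAD family 𝒜 on ℕ there exists a free ultrafilter p on ℕ such that both Ψ(𝒜) and its Vietoris hyperspace exp(Ψ(𝒜)) are p-pseudocompact. -/
open Set

/-- The Vietoris hyperspace: nonempty closed subsets of X. -/
def Hyperspace (X : Type*) [TopologicalSpace X] : Type _ :=
  {F : Set X // F.Nonempty ∧ IsClosed F}

/-- The Vietoris topology, generated by the sets U⁺ and U⁻ for U open. -/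
instance (X : Type*) [TopologicalSpace X] : TopologicalSpace (Hyperspace X) :=
  TopologicalSpace.generateFrom
    ({S | ∃ U : Set X, IsOpen U ∧ S = {F : Hyperspace X | F.1 ⊆ U}} ∪
      {S | ∃ U : Set X, IsOpen U ∧ S = {F : Hyperspace X | (F.1 ∩ U).Nonempty}})

/-! ### Infrastructure -/

section Infra
open TopologicalSpace

lemma exists_finite_subbasis {X : Type*} [t : TopologicalSpace X] {S : Set (Set X)}
    (hS : t = TopologicalSpace.generateFrom S) {U : Set X} (hU : IsOpen U) {x : X}
    (hx : x ∈ U) :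
    ∃ T : Set (Set X), T.Finite ∧ T ⊆ S ∧ x ∈ ⋂₀ T ∧ ⋂₀ T ⊆ U := by
  obtain ⟨v, ⟨T, ⟨hTf, hTS⟩, rfl⟩, hxv, hvU⟩ :=
    (TopologicalSpace.isTopologicalBasis_of_subbasis hS).exists_subset_of_mem_open hx hU
  exact ⟨T, hTf, hTS, hxv, hvU⟩

/-! #### ω* basics -/

def star' (B : Set ℕ) : Set OmegaStar := {p : OmegaStar | B ∈ p.1}

lemma isOpen_star' (B : Set ℕ) : IsOpen (star' B) :=
  TopologicalSpace.isOpen_generateFrom_of_mem ⟨B, rfl⟩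

lemma IsFree.infinite_of_mem {p : Ultrafilter ℕ} (hp : IsFree p) {B : Set ℕ}
    (hB : B ∈ p) : B.Infinite := by
  by_contra hfin
  rw [Set.not_infinite] at hfin
  have : Bᶜ ∈ p := hp hfin.compl_mem_cofinite
  have h2 := Filter.inter_mem hB this
  rw [Set.inter_compl_self] at h2
  exact (Filter.empty_notMem _) h2

lemma exists_free_mem {B : Set ℕ} (hB : B.Infinite) :
    ∃ p : Ultrafilter ℕ, IsFree p ∧ B ∈ p := by
  haveI h : (Filter.cofinite ⊓ Filter.principal B).NeBot :=
    Filter.cofinite_inf_principal_neBot_iff.2 hB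
  refine ⟨Ultrafilter.of (Filter.cofinite ⊓ Filter.principal B), ?_, ?_⟩
  · exact le_trans (Ultrafilter.of_le _) inf_le_left
  · exact Filter.le_principal_iff.1 (le_trans (Ultrafilter.of_le _) inf_le_right)

lemma omega_basis {U : Set OmegaStar} (hU : IsOpen U) {p : OmegaStar} (hp : p ∈ U) :
    ∃ B : Set ℕ, B ∈ p.1 ∧ star' B ⊆ U := by
  obtain ⟨T, hTf, hTS, hxT, hTU⟩ := exists_finite_subbasis rfl hU hp
  have : ∀ v : Set OmegaStar, ∃ B : Set ℕ, v ∈ T → (B ∈ p.1 ∧ star' B ⊆ v) := by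
    intro v
    by_cases hv : v ∈ T
    · obtain ⟨B, rfl⟩ := hTS hv
      exact ⟨B, fun _ => ⟨hxT _ hv, fun q hq => hq⟩⟩
    · exact ⟨univ, fun h => absurd h hv⟩
  choose Bf hBf using this
  refine ⟨⋂ v ∈ T, Bf v, ?_, ?_⟩
  · exact (Filter.biInter_mem hTf).2 fun v hv => (hBf v hv).1
  · intro q hq
    refine hTU fun v hv => (hBf v hv).2 ?_
    exact Filter.mem_of_superset hq (biInter_subset_of_mem hv)

/-! #### Ψ basics -/

namespace PsiSpace
variable {𝒜 : Set (Set ℕ)}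

lemma nat_ne_pt {n : ℕ} {a : {a : Set ℕ // a ∈ 𝒜}} : (nat n : PsiSpace 𝒜) ≠ pt a := by
  intro h; exact Sum.inl_ne_inr h

lemma nat_injective : Function.Injective (nat : ℕ → PsiSpace 𝒜) := fun a b h => by
  cases h; rfl

lemma pt_injective : Function.Injective (pt : _ → PsiSpace 𝒜) := fun a b h => by
  cases h; rfl

lemma isOpen_nat_singleton (n : ℕ) : IsOpen ({nat n} : Set (PsiSpace 𝒜)) :=
  TopologicalSpace.isOpen_generateFrom_of_mem (Or.inl ⟨n, rfl⟩)

lemma isOpen_nbhd (a : {a : Set ℕ // a ∈ 𝒜}) {F : Set ℕ} (hF : F.Finite) :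
    IsOpen (insert (pt a) (nat '' ((a : Set ℕ) \ F))) :=
  TopologicalSpace.isOpen_generateFrom_of_mem (Or.inr ⟨a, F, hF, rfl⟩)

lemma pt_basis {U : Set (PsiSpace 𝒜)} (hU : IsOpen U) {a : {a : Set ℕ // a ∈ 𝒜}}
    (ha : pt a ∈ U) :
    ∃ F : Set ℕ, F.Finite ∧ insert (pt a) (nat '' ((a : Set ℕ) \ F)) ⊆ U := by
  obtain ⟨T, hTf, hTS, hxT, hTU⟩ := exists_finite_subbasis rfl hU ha
  have key : ∀ v : Set (PsiSpace 𝒜), ∃ F : Set ℕ, v ∈ T →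
      (F.Finite ∧ insert (pt a) (nat '' ((a : Set ℕ) \ F)) ⊆ v) := by
    intro v
    by_cases hv : v ∈ T
    · rcases hTS hv with ⟨n, rfl⟩ | ⟨b, F, hF, rfl⟩
      · exact absurd (hxT _ hv) (fun h => nat_ne_pt (Eq.symm h))
      · have hab : b = a := by
          have := hxT _ hv
          rcases this with h | ⟨m, _, hm⟩
          · exact pt_injective h.symm ▸ rfl
          · exact absurd hm nat_ne_pt
        subst hab
        exact ⟨F, fun _ => ⟨hF, subset_rfl⟩⟩
    · exact ⟨∅, fun h => absurd h hv⟩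
  choose Ff hFf using key
  refine ⟨⋃ v ∈ T, Ff v, hTf.biUnion (fun v hv => (hFf v hv).1), ?_⟩
  intro x hx
  refine hTU fun v hv => (hFf v hv).2 ?_
  rcases hx with rfl | ⟨m, hm, rfl⟩
  · exact mem_insert _ _
  · exact Or.inr ⟨m, ⟨hm.1, fun hmf => hm.2 (mem_biUnion hv hmf)⟩, rfl⟩

lemma exists_nat_mem (h1 : ∀ a ∈ 𝒜, a.Infinite) {U : Set (PsiSpace 𝒜)} (hU : IsOpen U)
    (hne : U.Nonempty) : ∃ n, nat n ∈ U := by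
  obtain ⟨x, hx⟩ := hne
  rcases x with n | a
  · exact ⟨n, hx⟩
  · obtain ⟨F, hF, hsub⟩ := pt_basis hU (a := a) hx
    obtain ⟨m, hm⟩ := ((h1 a a.2).diff hF).nonempty
    exact ⟨m, hsub (Or.inr ⟨m, hm, rfl⟩)⟩

lemma isClosed_nat_image {s : Set ℕ} (hs : s.Finite) :
    IsClosed (nat '' s : Set (PsiSpace 𝒜)) := by
  rw [← isOpen_compl_iff, isOpen_iff_forall_mem_open]
  rintro x hx
  rcases x with n | a
  · refine ⟨{nat n}, ?_, isOpen_nat_singleton n, rfl⟩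
    intro y hy; rcases hy with rfl; exact hx
  · refine ⟨insert (pt a) (nat '' ((a : Set ℕ) \ s)), ?_, isOpen_nbhd a hs, mem_insert _ _⟩
    rintro y (rfl | ⟨m, hm, rfl⟩)
    · exact hx
    · rintro ⟨m', hm', hh⟩
      exact hm.2 (nat_injective hh ▸ hm')

end PsiSpace

end Infra


/-! ### Forward direction machinery -/

section Forward

variable {𝒜 : Set (Set ℕ)}

lemma preimage_finite_not_mem {p : Ultrafilter ℕ} {f : ℕ → ℕ}
    (hm : ∀ m, {n | f n = m} ∉ p) {F : Set ℕ} (hF : F.Finite) : {n | f n ∈ F} ∉ p := by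
  intro h
  have heq : {n | f n ∈ F} = ⋃ m ∈ F, {n | f n = m} := by ext; simp
  rw [heq] at h
  rcases (Ultrafilter.finite_biUnion_mem_iff hF).1 h with ⟨m, _, hm2⟩
  exact hm m hm2

/-- The key limit-existence lemma for sequences of isolated points of Ψ(𝒜). -/
lemma psi_limit {p : Ultrafilter ℕ} {f : ℕ → ℕ}
    (hD : (∃ m, {n | f n = m} ∈ p) ∨ ∃ a ∈ 𝒜, {n | f n ∈ a} ∈ p) :
    ∃ x : PsiSpace 𝒜, ∀ V : Set (PsiSpace 𝒜), IsOpen V → x ∈ V →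
      {n | PsiSpace.nat (f n) ∈ V} ∈ p := by
  by_cases hm : ∃ m, {n | f n = m} ∈ p
  · obtain ⟨m, hm⟩ := hm
    refine ⟨PsiSpace.nat m, fun V _ hmV => ?_⟩
    exact Filter.mem_of_superset hm (fun n hn => by simp only [mem_setOf_eq] at hn ⊢; rw [hn]; exact hmV)
  · push_neg at hm
    obtain ⟨a, ha, hfa⟩ := hD.resolve_left (by push_neg; exact hm)
    refine ⟨PsiSpace.pt ⟨a, ha⟩, fun V hV hptV => ?_⟩
    obtain ⟨F, hF, hsub⟩ := PsiSpace.pt_basis hV hptV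
    have h1 : {n | f n ∈ a \ F} ∈ p := by
      have h2 : {n | f n ∈ F}ᶜ ∈ p :=
        (Ultrafilter.compl_mem_iff_notMem).2 (preimage_finite_not_mem hm hF)
      have : {n | f n ∈ a \ F} = {n | f n ∈ a} ∩ {n | f n ∈ F}ᶜ := by
        ext n; simp [Set.mem_diff]
      rw [this]; exact Filter.inter_mem hfa h2
    refine Filter.mem_of_superset h1 (fun n hn => ?_)
    exact hsub (Or.inr ⟨f n, hn, rfl⟩)

/-- The dense open subset of ω* of ultrafilters giving a `p`-limit to the sequence `f`. -/
def Dset (𝒜 : Set (Set ℕ)) (f : ℕ → ℕ) : Set OmegaStar :=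
  {q : OmegaStar | (∃ m, {n | f n = m} ∈ q.1) ∨ ∃ a ∈ 𝒜, {n | f n ∈ a} ∈ q.1}

lemma isOpen_Dset (f : ℕ → ℕ) : IsOpen (Dset 𝒜 f) := by
  have : Dset 𝒜 f = (⋃ m, star' {n | f n = m}) ∪ ⋃ a ∈ 𝒜, star' {n | f n ∈ a} := by
    ext q; simp [Dset, star', mem_iUnion]
  rw [this]
  exact (isOpen_iUnion fun m => isOpen_star' _).union
    (isOpen_biUnion fun a _ => isOpen_star' _)

lemma dense_Dset (hM : MadFamily 𝒜) (f : ℕ → ℕ) : Dense (Dset 𝒜 f) := by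
  rw [dense_iff_inter_open]
  intro O hO ⟨q, hq⟩
  obtain ⟨B, hBq, hBO⟩ := omega_basis hO hq
  have hBinf : B.Infinite := q.2.infinite_of_mem hBq
  by_cases hc : ∃ m, (B ∩ {n | f n = m}).Infinite
  · obtain ⟨m, hm⟩ := hc
    obtain ⟨r, hrf, hrB⟩ := exists_free_mem hm
    refine ⟨⟨r, hrf⟩, hBO ?_, Or.inl ⟨m, ?_⟩⟩
    · exact Filter.mem_of_superset hrB inter_subset_left
    · exact Filter.mem_of_superset hrB inter_subset_right
  · push_neg at hc
    have himg : (f '' B).Infinite := by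
      intro hfin
      have : B ⊆ ⋃ m ∈ f '' B, (B ∩ {n | f n = m}) := by
        intro n hn
        exact mem_biUnion (mem_image_of_mem f hn) ⟨hn, rfl⟩
      exact hBinf (Set.Finite.subset (hfin.biUnion (fun m _ => hc m)) this)
    obtain ⟨a, ha, hainf⟩ := hM.2 _ himg
    have hkey : (B ∩ {n | f n ∈ a}).Infinite := by
      have hsurj : f '' B ∩ a ⊆ f '' (B ∩ {n | f n ∈ a}) := by
        rintro y ⟨⟨n, hnB, rfl⟩, hya⟩
        exact ⟨n, ⟨hnB, hya⟩, rfl⟩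
      intro hfin
      exact hainf (Set.Finite.subset (Set.Finite.image f hfin) hsurj)
    obtain ⟨r, hrf, hrB⟩ := exists_free_mem hkey
    refine ⟨⟨r, hrf⟩, hBO ?_, Or.inr ⟨a, ha, ?_⟩⟩
    · exact Filter.mem_of_superset hrB inter_subset_left
    · exact Filter.mem_of_superset hrB inter_subset_right

/-- Under the Baire-number hypothesis, there is a single free ultrafilter in every `Dset`. -/
lemma exists_good_ultrafilter (hM : MadFamily 𝒜)
    (hLT : Cardinal.continuum < baireNumberOmegaStar) :
    ∃ q : OmegaStar, ∀ f : ℕ → ℕ, q ∈ Dset 𝒜 f := by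
  by_contra hno
  push_neg at hno
  have hempty : ⋂₀ (range (fun f => Dset 𝒜 f)) = ∅ := by
    ext q
    simp only [mem_sInter, mem_range, mem_empty_iff_false, iff_false, not_forall]
    obtain ⟨f, hf⟩ := hno q
    exact ⟨_, ⟨f, rfl⟩, hf⟩
  have hmem : Cardinal.mk ↥(range (fun f => Dset 𝒜 f)) ∈
      {c : Cardinal.{0} | ∃ D : Set (Set OmegaStar),
        (∀ U ∈ D, IsOpen U ∧ Dense U) ∧ ⋂₀ D = ∅ ∧ Cardinal.mk ↥D = c} := by
    refine ⟨range (fun f => Dset 𝒜 f), ?_, hempty, rfl⟩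
    rintro U ⟨f, rfl⟩
    exact ⟨isOpen_Dset f, dense_Dset hM f⟩
  have hle : Cardinal.mk ↥(range (fun f => Dset 𝒜 f)) ≤ Cardinal.continuum := by
    refine le_trans Cardinal.mk_range_le ?_
    rw [Cardinal.mk_arrow]
    simp [Cardinal.aleph0_power_aleph0]
  exact absurd (le_trans (csInf_le' hmem) hle) (not_le.2 hLT)

end Forward


/-! ### Forward direction: hyperspace machinery -/

section ForwardHyper

variable {𝒜 : Set (Set ℕ)}

lemma hyper_finite_mem_open (h1 : ∀ a ∈ 𝒜, a.Infinite)
    {E : Set (Hyperspace (PsiSpace 𝒜))} (hE : IsOpen E) (hne : E.Nonempty) :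
    ∃ (s : Set ℕ) (hs : s.Finite) (hsn : s.Nonempty),
      (⟨PsiSpace.nat '' s, hsn.image _, PsiSpace.isClosed_nat_image hs⟩ :
        Hyperspace (PsiSpace 𝒜)) ∈ E := by
  classical
  obtain ⟨K₀, hK₀⟩ := hne
  obtain ⟨T, hTf, hTS, hKT, hTE⟩ := exists_finite_subbasis rfl hE hK₀
  have hch : ∀ v : Set (Hyperspace (PsiSpace 𝒜)), ∃ U : Set (PsiSpace 𝒜), v ∈ T →
      (IsOpen U ∧ (v = {F : Hyperspace (PsiSpace 𝒜) | F.1 ⊆ U} ∨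
        v = {F : Hyperspace (PsiSpace 𝒜) | (F.1 ∩ U).Nonempty})) := by
    intro v
    by_cases hv : v ∈ T
    · rcases hTS hv with ⟨U, hU, rfl⟩ | ⟨U, hU, rfl⟩
      · exact ⟨U, fun _ => ⟨hU, Or.inl rfl⟩⟩
      · exact ⟨U, fun _ => ⟨hU, Or.inr rfl⟩⟩
    · exact ⟨univ, fun h => absurd h hv⟩
  choose Uf hUf using hch
  set Tp := {v ∈ T | v = {F : Hyperspace (PsiSpace 𝒜) | F.1 ⊆ Uf v}} with hTp
  set W := ⋂ v ∈ Tp, Uf v with hW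
  have hWopen : IsOpen W :=
    Set.Finite.isOpen_biInter (hTf.subset (sep_subset _ _)) (fun v hv => (hUf v hv.1).1)
  have hK₀W : K₀.1 ⊆ W := by
    refine subset_iInter₂ (fun v hv => ?_)
    have h := hKT v hv.1
    rw [hv.2] at h
    exact h
  obtain ⟨x₀, hx₀⟩ := K₀.2.1
  obtain ⟨n₀, hn₀⟩ := PsiSpace.exists_nat_mem h1 hWopen ⟨x₀, hK₀W hx₀⟩
  have hmform : ∀ v ∈ T, v ∉ Tp →
      v = {F : Hyperspace (PsiSpace 𝒜) | (F.1 ∩ Uf v).Nonempty} := by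
    intro v hv hvp
    rcases (hUf v hv).2 with h | h
    · exact absurd ⟨hv, h⟩ hvp
    · exact h
  have hmv : ∀ v : Set (Hyperspace (PsiSpace 𝒜)), ∃ n : ℕ, (v ∈ T ∧ v ∉ Tp) →
      PsiSpace.nat n ∈ W ∩ Uf v := by
    intro v
    by_cases hv : v ∈ T ∧ v ∉ Tp
    · have h := hKT v hv.1
      rw [hmform v hv.1 hv.2] at h
      obtain ⟨y, hy1, hy2⟩ := h
      obtain ⟨n, hn⟩ := PsiSpace.exists_nat_mem h1 (hWopen.inter (hUf v hv.1).1)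
        ⟨y, hK₀W hy1, hy2⟩
      exact ⟨n, fun _ => hn⟩
    · exact ⟨0, fun h => absurd h hv⟩
  choose nf hnf using hmv
  set s : Set ℕ := insert n₀ (⋃ v ∈ {v ∈ T | v ∉ Tp}, {nf v}) with hs
  have hsfin : s.Finite :=
    ((hTf.subset (sep_subset _ _)).biUnion (fun _ _ => finite_singleton _)).insert n₀
  have hsne : s.Nonempty := ⟨n₀, mem_insert _ _⟩
  refine ⟨s, hsfin, hsne, hTE ?_⟩
  intro v hv
  by_cases hvp : v ∈ Tp
  · rw [hvp.2]
    rintro y ⟨m, hm, rfl⟩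
    rcases hm with rfl | hm
    · exact biInter_subset_of_mem hvp hn₀
    · obtain ⟨v', hv', hm⟩ := mem_iUnion₂.1 hm
      rcases hm with rfl
      exact biInter_subset_of_mem hvp (hnf v' ⟨hv'.1, hv'.2⟩).1
  · rw [hmform v hv hvp]
    refine ⟨PsiSpace.nat (nf v), ⟨nf v, ?_, rfl⟩, (hnf v ⟨hv, hvp⟩).2⟩
    exact Or.inr (mem_biUnion (⟨hv, hvp⟩ : v ∈ {v ∈ T | v ∉ Tp}) rfl)

lemma exp_limit {p : Ultrafilter ℕ}
    (Hp : ∀ f : ℕ → ℕ, ∃ x : PsiSpace 𝒜, ∀ V : Set (PsiSpace 𝒜), IsOpen V → x ∈ V →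
      {n | PsiSpace.nat (f n) ∈ V} ∈ p)
    (s : ℕ → Set ℕ) (hfin : ∀ n, (s n).Finite) (hne : ∀ n, (s n).Nonempty) :
    ∃ K : Hyperspace (PsiSpace 𝒜), ∀ 𝒱 : Set (Hyperspace (PsiSpace 𝒜)),
      IsOpen 𝒱 → K ∈ 𝒱 →
      {n | (⟨PsiSpace.nat '' s n, (hne n).image _, PsiSpace.isClosed_nat_image (hfin n)⟩ :
        Hyperspace (PsiSpace 𝒜)) ∈ 𝒱} ∈ p := by
  classical
  set Kset : Set (PsiSpace 𝒜) :=
    {x | ∀ V : Set (PsiSpace 𝒜), IsOpen V → x ∈ V →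
      {n | (PsiSpace.nat '' s n ∩ V).Nonempty} ∈ p} with hKset
  have Kcl : IsClosed Kset := by
    rw [← isOpen_compl_iff, isOpen_iff_forall_mem_open]
    intro x hx
    simp only [mem_compl_iff, hKset, mem_setOf_eq, not_forall] at hx
    obtain ⟨V, hVopen, hxV, hVp⟩ := hx
    exact ⟨V, fun y hy hy2 => hVp (hy2 V hVopen hy), hVopen, hxV⟩
  have Kne : Kset.Nonempty := by
    obtain ⟨x, hx⟩ := Hp (fun n => (hne n).some)
    refine ⟨x, fun V hV hxV => Filter.mem_of_superset (hx V hV hxV) (fun n hn => ?_)⟩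
    exact ⟨PsiSpace.nat ((hne n).some), ⟨_, (hne n).some_mem, rfl⟩, hn⟩
  have claimI : ∀ U : Set (PsiSpace 𝒜), IsOpen U → Kset ⊆ U →
      {n | PsiSpace.nat '' s n ⊆ U} ∈ p := by
    intro U hU hKU
    by_contra hA
    have hAc : {n | PsiSpace.nat '' s n ⊆ U}ᶜ ∈ p := Ultrafilter.compl_mem_iff_notMem.2 hA
    have hg : ∀ n, ∃ m, ¬(PsiSpace.nat '' s n ⊆ U) → (m ∈ s n ∧ PsiSpace.nat m ∉ U) := by
      intro n
      by_cases hn : PsiSpace.nat '' s n ⊆ U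
      · exact ⟨(hne n).some, fun h => absurd hn h⟩
      · obtain ⟨y, ⟨m, hm, rfl⟩, hyU⟩ := not_subset.1 hn
        exact ⟨m, fun _ => ⟨hm, hyU⟩⟩
    choose g hg using hg
    obtain ⟨x, hx⟩ := Hp g
    have hxK : x ∈ Kset := by
      intro V hV hxV
      refine Filter.mem_of_superset (Filter.inter_mem (hx V hV hxV) hAc) ?_
      rintro n ⟨hn1, hn2⟩
      exact ⟨PsiSpace.nat (g n), ⟨g n, (hg n hn2).1, rfl⟩, hn1⟩
    have hmem := Filter.inter_mem (hx U hU (hKU hxK)) hAc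
    obtain ⟨n, hn1, hn2⟩ := Filter.nonempty_of_mem hmem
    exact (hg n hn2).2 hn1
  refine ⟨⟨Kset, Kne, Kcl⟩, fun 𝒱 h𝒱 hK𝒱 => ?_⟩
  obtain ⟨T, hTf, hTS, hKT, hT𝒱⟩ := exists_finite_subbasis rfl h𝒱 hK𝒱
  have hmem : (⋂ v ∈ T, {n | (⟨PsiSpace.nat '' s n, (hne n).image _,
      PsiSpace.isClosed_nat_image (hfin n)⟩ : Hyperspace (PsiSpace 𝒜)) ∈ v}) ∈ p := by
    refine (Filter.biInter_mem hTf).2 (fun v hv => ?_)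
    rcases hTS hv with ⟨U, hU, rfl⟩ | ⟨U, hU, rfl⟩
    · have hKv : Kset ⊆ U := hKT _ hv
      exact claimI U hU hKv
    · obtain ⟨x, hxK, hxU⟩ := hKT _ hv
      exact hxK U hU hxU
  refine Filter.mem_of_superset hmem (fun n hn => ?_)
  exact hT𝒱 (fun v hv => mem_iInter₂.1 hn v hv)

lemma forward_psi (h1 : ∀ a ∈ 𝒜, a.Infinite) {p : Ultrafilter ℕ}
    (Hp : ∀ f : ℕ → ℕ, ∃ x : PsiSpace 𝒜, ∀ V : Set (PsiSpace 𝒜), IsOpen V → x ∈ V →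
      {n | PsiSpace.nat (f n) ∈ V} ∈ p) :
    PPseudocompact (PsiSpace 𝒜) p := by
  intro U hU
  choose f hf using fun n => PsiSpace.exists_nat_mem h1 (hU n).1 (hU n).2
  obtain ⟨x, hx⟩ := Hp f
  exact ⟨x, fun V hV hxV =>
    Filter.mem_of_superset (hx V hV hxV) (fun n hn => ⟨_, hf n, hn⟩)⟩

lemma forward_exp (h1 : ∀ a ∈ 𝒜, a.Infinite) {p : Ultrafilter ℕ}
    (Hp : ∀ f : ℕ → ℕ, ∃ x : PsiSpace 𝒜, ∀ V : Set (PsiSpace 𝒜), IsOpen V → x ∈ V →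
      {n | PsiSpace.nat (f n) ∈ V} ∈ p) :
    PPseudocompact (Hyperspace (PsiSpace 𝒜)) p := by
  intro 𝒰 h𝒰
  choose s hfin hsne hmem using fun n => hyper_finite_mem_open h1 (h𝒰 n).1 (h𝒰 n).2
  obtain ⟨K, hK⟩ := exp_limit Hp s hfin hsne
  refine ⟨K, fun V hV hKV => ?_⟩
  exact Filter.mem_of_superset (hK V hV hKV) (fun n hn => ⟨_, hmem n, hn⟩)

end ForwardHyper


/-! ### Converse direction machinery -/

section Converse

/-! #### ω* has no isolated points, and the Baire-number set is nonempty -/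

lemma exists_two_mem {B : Set ℕ} (hB : B.Infinite) :
    ∃ q r : OmegaStar, q ≠ r ∧ B ∈ q.1 ∧ B ∈ r.1 := by
  let e := hB.natEmbedding
  set B₁ : Set ℕ := range (fun k => (e (2 * k)).1) with hB₁
  set B₂ : Set ℕ := range (fun k => (e (2 * k + 1)).1) with hB₂
  have hinj : ∀ m m' : ℕ, (e m).1 = (e m').1 → m = m' := fun m m' h =>
    e.injective (Subtype.coe_injective h)
  have h1inf : B₁.Infinite :=
    infinite_range_of_injective (fun k k' h => by
      have := hinj _ _ h; omega)
  have h2inf : B₂.Infinite :=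
    infinite_range_of_injective (fun k k' h => by
      have := hinj _ _ h; omega)
  have hdisj : B₁ ∩ B₂ = ∅ := by
    ext m
    simp only [hB₁, hB₂, mem_inter_iff, mem_range, mem_empty_iff_false, iff_false, not_and]
    rintro ⟨k, rfl⟩ ⟨k', hk⟩
    have := hinj _ _ hk; omega
  obtain ⟨q, hqf, hqB⟩ := exists_free_mem h1inf
  obtain ⟨r, hrf, hrB⟩ := exists_free_mem h2inf
  refine ⟨⟨q, hqf⟩, ⟨r, hrf⟩, ?_, ?_, ?_⟩
  · intro h
    have hqr : q = r := congrArg Subtype.val h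
    have hq : B₁ ∈ r := by rw [← hqr]; exact hqB
    have := Filter.inter_mem hq hrB
    rw [hdisj] at this
    exact Filter.empty_notMem _ this
  · exact Filter.mem_of_superset hqB (fun m ⟨k, hk⟩ => hk ▸ (e (2 * k)).2)
  · exact Filter.mem_of_superset hrB (fun m ⟨k, hk⟩ => hk ▸ (e (2 * k + 1)).2)

lemma isOpen_compl_singleton_omega (q : OmegaStar) : IsOpen ({q}ᶜ : Set OmegaStar) := by
  rw [isOpen_iff_forall_mem_open]
  intro r hr
  have hne : r ≠ q := hr
  have : ∃ B ∈ r.1, B ∉ q.1 := by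
    by_contra hall
    push_neg at hall
    have hle : (q.1 : Filter ℕ) ≤ (r.1 : Filter ℕ) := fun B hB => hall B hB
    have := r.1.unique hle
    exact hne (Subtype.ext (Ultrafilter.coe_injective this).symm)
  obtain ⟨B, hBr, hBq⟩ := this
  refine ⟨star' B, ?_, isOpen_star' B, hBr⟩
  intro x hx
  intro hxq
  rw [mem_singleton_iff] at hxq
  exact hBq (hxq ▸ hx)

lemma dense_compl_singleton_omega (q : OmegaStar) : Dense ({q}ᶜ : Set OmegaStar) := by
  rw [dense_iff_inter_open]
  rintro O hO ⟨r, hr⟩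
  obtain ⟨B, hBr, hBO⟩ := omega_basis hO hr
  obtain ⟨q1, q2, hne, h1, h2⟩ := exists_two_mem (r.2.infinite_of_mem hBr)
  by_cases h : q1 = q
  · exact ⟨q2, hBO h2, fun hq => hne (h.trans (mem_singleton_iff.1 hq).symm)⟩
  · exact ⟨q1, hBO h1, h⟩

lemma baire_set_nonempty : {c : Cardinal.{0} | ∃ D : Set (Set OmegaStar),
    (∀ U ∈ D, IsOpen U ∧ Dense U) ∧ ⋂₀ D = ∅ ∧ Cardinal.mk ↥D = c}.Nonempty := by
  refine ⟨_, {U : Set OmegaStar | ∃ q : OmegaStar, U = {q}ᶜ}, ?_, ?_, rfl⟩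
  · rintro U ⟨q, rfl⟩
    exact ⟨isOpen_compl_singleton_omega q, dense_compl_singleton_omega q⟩
  · ext p
    simp only [mem_sInter, mem_empty_iff_false, iff_false, not_forall]
    exact ⟨{p}ᶜ, ⟨p, rfl⟩, fun h => h rfl⟩

/-! #### Coding and the column/window combinatorics -/

noncomputable def code (u : Set ℕ) (n : ℕ) : ℕ :=
  Encodable.encode (n, @Finset.filter _ (· ∈ u) (Classical.decPred _) (Finset.range (n + 1)))

lemma code_inj (u : Set ℕ) : Function.Injective (code u) := by
  intro n n' h
  have := Encodable.encode_injective h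
  exact (Prod.ext_iff.1 this).1

lemma code_cross {u u' : Set ℕ} (h : u ≠ u') :
    (range (code u) ∩ range (code u')).Finite := by
  have hex : ∃ i₀, ¬(i₀ ∈ u ↔ i₀ ∈ u') := by
    by_contra hall
    push_neg at hall
    exact h (Set.ext fun i => hall i)
  obtain ⟨i₀, hi₀⟩ := hex
  apply Set.Finite.subset ((finite_Iio i₀).image (code u))
  rintro m ⟨⟨n, rfl⟩, ⟨n', hn'⟩⟩
  have heq := Encodable.encode_injective hn'
  have hnn : n' = n := congrArg Prod.fst heq
  subst hnn
  have hfil := congrArg Prod.snd heq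
  simp only at hfil
  refine ⟨n', ?_, rfl⟩
  rw [mem_Iio]
  by_contra hlt
  push_neg at hlt
  have hmem : i₀ ∈ Finset.range (n' + 1) := Finset.mem_range.2 (by omega)
  have hiff := congrArg (fun S => i₀ ∈ S) hfil
  simp only [eq_iff_iff, Finset.mem_filter] at hiff
  exact hi₀ (Iff.symm ⟨fun hh => (hiff.1 ⟨hmem, hh⟩).2, fun hh => (hiff.2 ⟨hmem, hh⟩).2⟩)

def col (k : ℕ) : Set ℕ := {m | (Nat.unpair m).1 = k}

noncomputable def win (u : Set ℕ) (n : ℕ) : Set ℕ :=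
  (fun j => Nat.pair (code u n) j) '' (Iic n)

lemma win_finite (u : Set ℕ) (n : ℕ) : (win u n).Finite :=
  (finite_Iic n).image _

lemma win_nonempty (u : Set ℕ) (n : ℕ) : (win u n).Nonempty :=
  ⟨Nat.pair (code u n) 0, 0, by simp, rfl⟩

lemma win_subset_col (u : Set ℕ) (n : ℕ) : win u n ⊆ col (code u n) := by
  rintro m ⟨j, _, rfl⟩
  simp [col, Nat.unpair_pair]

lemma col_disjoint {k k' : ℕ} (h : k ≠ k') : col k ∩ col k' = ∅ := by
  ext m; simp only [col, mem_inter_iff, mem_setOf_eq, mem_empty_iff_false, iff_false, not_and]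
  intro h1 h2; rw [h1] at h2; exact h h2

lemma win_mem_col_eq {u : Set ℕ} {n k : ℕ} {m : ℕ} (hm : m ∈ win u n) (hk : m ∈ col k) :
    code u n = k := by
  have := win_subset_col u n hm
  simp only [col, mem_setOf_eq] at this hk
  rw [← this, hk]

lemma win_disjoint {u : Set ℕ} {n n' : ℕ} (h : n ≠ n') : win u n ∩ win u n' = ∅ := by
  ext m
  simp only [mem_inter_iff, mem_empty_iff_false, iff_false, not_and]
  intro h1 h2
  exact h (code_inj u (win_mem_col_eq h1 (win_subset_col u n' h2)))

lemma col_infinite (k : ℕ) : (col k).Infinite := by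
  apply Set.infinite_of_injective_forall_mem (f := fun j => Nat.pair k j)
  · intro j j' h
    have := congrArg Nat.unpair h
    simp only [Nat.unpair_pair, Prod.mk.injEq] at this
    exact this.2
  · intro j; simp [col, Nat.unpair_pair]

lemma col_injective : Function.Injective col := by
  intro k k' h
  have : Nat.pair k 0 ∈ col k' := h ▸ (by simp [col, Nat.unpair_pair])
  simpa [col, Nat.unpair_pair] using this

def Bset (u : Set ℕ) (a : Set ℕ) : Set ℕ := {n | (a ∩ win u n).Nonempty}

lemma Bset_col_finite (u : Set ℕ) (k : ℕ) : (Bset u (col k)).Finite := by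
  apply Set.Subsingleton.finite
  rintro n ⟨m, hm1, hm2⟩ n' ⟨m', hm'1, hm'2⟩
  exact code_inj u ((win_mem_col_eq hm2 hm1).trans (win_mem_col_eq hm'2 hm'1).symm)

/-- The goodness property for members of the special MAD family. -/
def GoodFor (Du : Set ℕ → Set OmegaStar) (a : Set ℕ) : Prop :=
  a.Infinite ∧ (∀ k, (a ∩ col k).Finite) ∧
    ∀ u, (Bset u a).Finite ∨ star' (Bset u a) ⊆ Du u

lemma dense_reduction {D : Set OmegaStar} (hO : IsOpen D) (hD : Dense D) {N : Set ℕ}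
    (hN : N.Infinite) : ∃ B : Set ℕ, B ⊆ N ∧ B.Infinite ∧ star' B ⊆ D := by
  obtain ⟨p0, hp0f, hp0N⟩ := exists_free_mem hN
  obtain ⟨q, hq1, hq2⟩ := hD.inter_open_nonempty (star' N) (isOpen_star' N) ⟨⟨p0, hp0f⟩, hp0N⟩
  obtain ⟨B₀, hB₀q, hB₀D⟩ := omega_basis hO hq2
  refine ⟨B₀ ∩ N, inter_subset_right, ?_, ?_⟩
  · exact q.2.infinite_of_mem (Filter.inter_mem hB₀q hq1)
  · intro r hr
    exact hB₀D (Filter.mem_of_superset hr inter_subset_left)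

lemma good_extension (Du : Set ℕ → Set OmegaStar)
    (hdense : ∀ u, IsOpen (Du u) ∧ Dense (Du u))
    {X : Set ℕ} (hX : X.Infinite) (hcol : ∀ k, (X ∩ col k).Finite) :
    ∃ a, a ⊆ X ∧ GoodFor Du a := by
  classical
  by_cases hcase : ∃ u, (Bset u X).Infinite
  · obtain ⟨u, hu⟩ := hcase
    obtain ⟨B, hBN, hBinf, hBD⟩ := dense_reduction (hdense u).1 (hdense u).2 hu
    have hpick : ∀ n, ∃ m, n ∈ B → m ∈ X ∩ win u n := by
      intro n
      by_cases hn : n ∈ B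
      · obtain ⟨m, hm⟩ := hBN hn
        exact ⟨m, fun _ => hm⟩
      · exact ⟨0, fun h => absurd h hn⟩
    choose x hx using hpick
    set a : Set ℕ := x '' B with ha
    have hinjOn : InjOn x B := by
      intro n hn n' hn' h
      by_contra hne
      have h1 := (hx n hn).2
      have h2 := (hx n' hn').2
      rw [h] at h1
      have : x n' ∈ win u n ∩ win u n' := ⟨h1, h2⟩
      rw [win_disjoint hne] at this
      exact this
    have haX : a ⊆ X := by rintro m ⟨n, hn, rfl⟩; exact (hx n hn).1
    refine ⟨a, haX, hBinf.image hinjOn, ?_, ?_⟩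
    · intro k
      apply Set.Subsingleton.finite
      rintro m ⟨⟨n, hn, rfl⟩, hmk⟩ m' ⟨⟨n', hn', rfl⟩, hm'k⟩
      have e1 := win_mem_col_eq (hx n hn).2 hmk
      have e2 := win_mem_col_eq (hx n' hn').2 hm'k
      rw [code_inj u (e1.trans e2.symm)]
    · intro u'
      by_cases huu : u' = u
      · subst huu
        have hBa : Bset u' a = B := by
          ext n
          constructor
          · rintro ⟨m, ⟨n', hn', rfl⟩, hm2⟩
            have : x n' ∈ win u' n' ∩ win u' n := ⟨(hx n' hn').2, hm2⟩
            by_cases hne : n' = n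
            · exact hne ▸ hn'
            · rw [win_disjoint hne] at this; exact absurd this (notMem_empty _)
          · intro hn
            exact ⟨x n, ⟨n, hn, rfl⟩, (hx n hn).2⟩
        rw [hBa]
        exact Or.inr hBD
      · left
        have hsub : Bset u' a ⊆ (code u') ⁻¹' (range (code u) ∩ range (code u')) := by
          rintro n ⟨m, ⟨n₀, hn₀, rfl⟩, hm2⟩
          have e1 : x n₀ ∈ col (code u n₀) := win_subset_col u n₀ (hx n₀ hn₀).2
          have e2 : code u' n = code u n₀ := win_mem_col_eq hm2 e1
          exact ⟨⟨n₀, e2.symm⟩, ⟨n, rfl⟩⟩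
        apply Set.Finite.subset _ hsub
        exact Set.Finite.preimage (code_inj u').injOn (code_cross (Ne.symm huu))
  · push_neg at hcase
    exact ⟨X, subset_rfl, hX, hcol, fun u => Or.inl (hcase u)⟩

/-! #### The special MAD family via Zorn -/

lemma exists_special_mad (Du : Set ℕ → Set OmegaStar)
    (hdense : ∀ u, IsOpen (Du u) ∧ Dense (Du u)) :
    ∃ 𝒜 : Set (Set ℕ), MadFamily 𝒜 ∧ (∀ k, col k ∈ 𝒜) ∧
      ∀ a ∈ 𝒜, (∃ k, a = col k) ∨ GoodFor Du a := by
  classical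
  set Coll : Set (Set ℕ) := range col with hColl
  set S : Set (Set (Set ℕ)) := {F | Coll ⊆ F ∧ (F ⊆ Coll ∪ {a | GoodFor Du a}) ∧
    ∀ a ∈ F, ∀ b ∈ F, a ≠ b → (a ∩ b).Finite} with hS
  have hCollS : Coll ∈ S := by
    refine ⟨subset_rfl, subset_union_left, ?_⟩
    rintro a ⟨k, rfl⟩ b ⟨k', rfl⟩ hne
    have hkk : k ≠ k' := fun h => hne (h ▸ rfl)
    rw [col_disjoint hkk]
    exact finite_empty
  have hchainub : ∀ c ⊆ S, IsChain (· ⊆ ·) c → c.Nonempty →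
      ∃ ub ∈ S, ∀ s ∈ c, s ⊆ ub := by
    intro c hcS hchain hcne
    refine ⟨⋃₀ c, ⟨?_, ?_, ?_⟩, fun F hF => subset_sUnion_of_mem hF⟩
    · obtain ⟨F, hF⟩ := hcne
      exact subset_trans (hcS hF).1 (subset_sUnion_of_mem hF)
    · rintro a ⟨F, hF, haF⟩
      exact (hcS hF).2.1 haF
    · rintro a ⟨F, hF, haF⟩ b ⟨G, hG, hbG⟩ hne
      rcases hchain.total hF hG with h | h
      · exact (hcS hG).2.2 a (h haF) b hbG hne
      · exact (hcS hF).2.2 a haF b (h hbG) hne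
  obtain ⟨𝒜, h𝒜1, h𝒜2⟩ := zorn_subset_nonempty S hchainub Coll hCollS
  have h𝒜S := h𝒜2.1
  have hcols : ∀ k, col k ∈ 𝒜 := fun k => h𝒜S.1 ⟨k, rfl⟩
  have hform : ∀ a ∈ 𝒜, (∃ k, a = col k) ∨ GoodFor Du a := by
    intro a ha
    rcases h𝒜S.2.1 ha with ⟨k, hk⟩ | hg
    · exact Or.inl ⟨k, hk.symm⟩
    · exact Or.inr hg
  have hmeminf : ∀ a ∈ 𝒜, a.Infinite := by
    intro a ha
    rcases hform a ha with ⟨k, rfl⟩ | hg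
    · exact col_infinite k
    · exact hg.1
  refine ⟨𝒜, ⟨⟨?_, hmeminf, h𝒜S.2.2⟩, ?_⟩, hcols, hform⟩
  · exact ((infinite_range_of_injective col_injective).mono h𝒜1)
  · -- maximality
    intro X hX
    by_contra hno
    push_neg at hno
    have hXcol : ∀ k, (X ∩ col k).Finite := by
      intro k
      have := hno (col k) (hcols k)
      exact this
    obtain ⟨a, haX, hgood⟩ := good_extension Du hdense hX hXcol
    have hanotin : a ∉ 𝒜 := by
      intro hin
      have := hno a hin
      exact hgood.1 (this.subset (subset_inter haX subset_rfl))
    have hins : insert a 𝒜 ∈ S := by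
      refine ⟨subset_trans h𝒜S.1 (subset_insert _ _), ?_, ?_⟩
      · rintro b (rfl | hb)
        · exact Or.inr hgood
        · exact h𝒜S.2.1 hb
      · rintro b (rfl | hb) c (rfl | hc) hne
        · exact absurd rfl hne
        · have := hno c hc
          exact this.subset (fun m hm => ⟨haX hm.1, hm.2⟩)
        · have := hno b hb
          apply Set.Finite.subset this
          rintro m hm
          exact ⟨haX hm.2, hm.1⟩
        · exact h𝒜S.2.2 b hb c hc hne
    exact hanotin (h𝒜2.2 hins (subset_insert _ _) (mem_insert _ _))

end Converse


/-! ### Hyperspace singleton lemmas -/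

section HyperSingleton

lemma isOpen_plus {X : Type*} [TopologicalSpace X] {U : Set X} (hU : IsOpen U) :
    IsOpen {F : Hyperspace X | F.1 ⊆ U} :=
  TopologicalSpace.isOpen_generateFrom_of_mem (Or.inl ⟨U, hU, rfl⟩)

lemma isOpen_minus {X : Type*} [TopologicalSpace X] {U : Set X} (hU : IsOpen U) :
    IsOpen {F : Hyperspace X | (F.1 ∩ U).Nonempty} :=
  TopologicalSpace.isOpen_generateFrom_of_mem (Or.inr ⟨U, hU, rfl⟩)

lemma isOpen_hyper_singleton {𝒜 : Set (Set ℕ)} {s : Set ℕ} (hs : s.Finite)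
    (hne : s.Nonempty) :
    IsOpen ({(⟨PsiSpace.nat '' s, hne.image _, PsiSpace.isClosed_nat_image hs⟩ :
      Hyperspace (PsiSpace 𝒜))} : Set (Hyperspace (PsiSpace 𝒜))) := by
  have himg : IsOpen (PsiSpace.nat '' s : Set (PsiSpace 𝒜)) := by
    have heq : (PsiSpace.nat '' s : Set (PsiSpace 𝒜)) = ⋃ m ∈ s, {PsiSpace.nat m} := by
      ext y
      simp only [mem_image, mem_iUnion, mem_singleton_iff]
      exact ⟨fun ⟨m, hm, h⟩ => ⟨m, hm, h.symm⟩, fun ⟨m, hm, h⟩ => ⟨m, hm, h.symm⟩⟩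
    rw [heq]
    exact isOpen_biUnion (fun m _ => PsiSpace.isOpen_nat_singleton m)
  have heq : ({(⟨PsiSpace.nat '' s, hne.image _, PsiSpace.isClosed_nat_image hs⟩ :
      Hyperspace (PsiSpace 𝒜))} : Set (Hyperspace (PsiSpace 𝒜))) =
      {F : Hyperspace (PsiSpace 𝒜) | F.1 ⊆ PsiSpace.nat '' s} ∩
        ⋂ m ∈ s, {F : Hyperspace (PsiSpace 𝒜) | (F.1 ∩ {PsiSpace.nat m}).Nonempty} := by
    ext F
    simp only [mem_singleton_iff, mem_inter_iff, mem_iInter, mem_setOf_eq]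
    constructor
    · rintro rfl
      exact ⟨subset_rfl, fun m hm => ⟨PsiSpace.nat m, ⟨m, hm, rfl⟩, rfl⟩⟩
    · rintro ⟨hsub, hall⟩
      apply Subtype.ext
      apply subset_antisymm hsub
      rintro y ⟨m, hm, rfl⟩
      obtain ⟨z, hz1, hz2⟩ := hall m hm
      rw [mem_singleton_iff] at hz2
      exact hz2 ▸ hz1
  rw [heq]
  exact (isOpen_plus himg).inter
    (hs.isOpen_biInter fun m _ => isOpen_minus (PsiSpace.isOpen_nat_singleton m))

end HyperSingleton

theorem stmt10 :
    Cardinal.continuum < baireNumberOmegaStar ↔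
      ∀ 𝒜 : Set (Set ℕ), MadFamily 𝒜 → ∃ p : Ultrafilter ℕ, IsFree p ∧
        PPseudocompact (PsiSpace 𝒜) p ∧
        PPseudocompact (Hyperspace (PsiSpace 𝒜)) p := by
  constructor
  · -- forward direction
    intro hLT 𝒜 hM
    obtain ⟨q, hq⟩ := exists_good_ultrafilter hM hLT
    have h1 := hM.1.2.1
    have Hp : ∀ f : ℕ → ℕ, ∃ x : PsiSpace 𝒜, ∀ V : Set (PsiSpace 𝒜), IsOpen V → x ∈ V →
        {n | PsiSpace.nat (f n) ∈ V} ∈ q.1 := fun f => psi_limit (hq f)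
    exact ⟨q.1, q.2, forward_psi h1 Hp, forward_exp h1 Hp⟩
  · -- converse direction
    intro hRHS
    by_contra hnLT
    push_neg at hnLT
    have hmem := csInf_mem baire_set_nonempty
    have hbn : baireNumberOmegaStar ∈ {c : Cardinal.{0} | ∃ D : Set (Set OmegaStar),
        (∀ U ∈ D, IsOpen U ∧ Dense U) ∧ ⋂₀ D = ∅ ∧ Cardinal.mk ↥D = c} := hmem
    obtain ⟨Dfam, hDprop, hDempty, hDmk⟩ := hbn
    have hmkle : Cardinal.mk ↥Dfam ≤ Cardinal.mk (Set ℕ) := by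
      rw [hDmk]
      calc baireNumberOmegaStar ≤ Cardinal.continuum := hnLT
        _ = Cardinal.mk (Set ℕ) := by
            rw [Cardinal.mk_set, Cardinal.mk_nat, Cardinal.two_power_aleph0]
    obtain ⟨ι⟩ := (Cardinal.le_def _ _).1 hmkle
    classical
    set Du : Set ℕ → Set OmegaStar := fun u =>
      if h : ∃ d : ↥Dfam, ι d = u then (Classical.choose h).1 else Set.univ with hDu
    have hdense : ∀ u, IsOpen (Du u) ∧ Dense (Du u) := by
      intro u
      by_cases h : ∃ d : ↥Dfam, ι d = u
      · simp only [hDu, dif_pos h]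
        exact hDprop _ (Classical.choose h).2
      · simp only [hDu, dif_neg h]
        exact ⟨isOpen_univ, dense_univ⟩
    have hcover : ∀ d ∈ Dfam, ∃ u, Du u = d := by
      intro d hd
      refine ⟨ι ⟨d, hd⟩, ?_⟩
      have h : ∃ d' : ↥Dfam, ι d' = ι ⟨d, hd⟩ := ⟨⟨d, hd⟩, rfl⟩
      have hspec := Classical.choose_spec h
      have heq : Classical.choose h = ⟨d, hd⟩ := ι.injective hspec
      simp only [hDu, dif_pos h, heq]
    obtain ⟨𝒜, hMAD, hcols, hgood⟩ := exists_special_mad Du hdense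
    obtain ⟨p, hfree, hΨ, hexp⟩ := hRHS 𝒜 hMAD
    have hpDu : ∀ u : Set ℕ, (⟨p, hfree⟩ : OmegaStar) ∈ Du u := by
      intro u
      obtain ⟨K, hK⟩ := hexp (fun n =>
        ({(⟨PsiSpace.nat '' win u n, (win_nonempty u n).image _,
          PsiSpace.isClosed_nat_image (win_finite u n)⟩ : Hyperspace (PsiSpace 𝒜))} :
          Set (Hyperspace (PsiSpace 𝒜))))
        (fun n => ⟨isOpen_hyper_singleton (win_finite u n) (win_nonempty u n), ⟨_, rfl⟩⟩)
      obtain ⟨x, hxK⟩ := K.2.1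
      have hcluster : ∀ W : Set (PsiSpace 𝒜), IsOpen W → x ∈ W →
          {n | (PsiSpace.nat '' win u n ∩ W).Nonempty} ∈ p := by
        intro W hW hxW
        have h2 := hK _ (isOpen_minus hW) ⟨x, hxK, hxW⟩
        refine Filter.mem_of_superset h2 ?_
        rintro n ⟨F, hF1, hF2⟩
        replace hF1 : F = _ := hF1
        subst hF1
        exact hF2
      rcases x with m | a
      · exfalso
        have hmm := hcluster {PsiSpace.nat m} (PsiSpace.isOpen_nat_singleton m) rfl
        have hfin : {n | ((PsiSpace.nat '' win u n : Set (PsiSpace 𝒜)) ∩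
            {PsiSpace.nat m}).Nonempty}.Finite := by
          apply Set.Subsingleton.finite
          rintro n ⟨y, ⟨m1, hm1, rfl⟩, hy2⟩ n' ⟨y', ⟨m2, hm2, rfl⟩, hy2'⟩
          rw [mem_singleton_iff] at hy2 hy2'
          have hm1' : m ∈ win u n := (PsiSpace.nat_injective hy2) ▸ hm1
          have hm2' : m ∈ win u n' := (PsiSpace.nat_injective hy2') ▸ hm2
          by_contra hne
          have hcontr : m ∈ win u n ∩ win u n' := ⟨hm1', hm2'⟩
          rw [win_disjoint hne] at hcontr
          exact hcontr
        exact (hfree.infinite_of_mem hmm) hfin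
      · have hWopen := PsiSpace.isOpen_nbhd a (finite_empty (α := ℕ))
        have hmm := hcluster _ hWopen (mem_insert _ _)
        have hsub : {n | (PsiSpace.nat '' win u n ∩
            insert (PsiSpace.pt a) (PsiSpace.nat '' ((a : Set ℕ) \ ∅))).Nonempty} ⊆
            Bset u ↑a := by
          rintro n ⟨y, ⟨m1, hm1, rfl⟩, hyW⟩
          rcases hyW with h | ⟨m2, hm2, hmeq⟩
          · exact absurd h PsiSpace.nat_ne_pt
          · have hm21 : m2 = m1 := PsiSpace.nat_injective hmeq
            exact ⟨m1, (hm21 ▸ hm2 : m1 ∈ (a : Set ℕ) \ ∅).1, hm1⟩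
        have hBp : Bset u ↑a ∈ p := Filter.mem_of_superset hmm hsub
        rcases hgood ↑a a.2 with ⟨k, hk⟩ | hg
        · exfalso
          rw [hk] at hBp
          exact (hfree.infinite_of_mem hBp) (Bset_col_finite u k)
        · rcases hg.2.2 u with hfin | hsubD
          · exact absurd hfin (hfree.infinite_of_mem hBp)
          · exact hsubD hBp
    have hfinal : (⟨p, hfree⟩ : OmegaStar) ∈ ⋂₀ Dfam := by
      intro d hd
      obtain ⟨u, hu⟩ := hcover d hd
      rw [← hu]
      exact hpDu u
    rw [hDempty] at hfinal
    exact hfinal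
end
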